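/- Assume the Setup. If there exist v,w ∈ X such that D(v) ∩ D(w) = ∅ and some edge of G joins a vertex of D(v) to a vertex of D(w), then G contains K_h as a topological subgraph. -/

import Mathlib

/-!
If `x ∈ D(v)` is adjacent to `y ∉ D(v)`, then in the `t`-CR-stable coloring with `v`
individualized the class of `x` is a singleton, while the class of `y` has more than `t`
vertices, all of diagonal color `χ(y,y)` and, by stability, all adjacent to `x`. By
2-stability of `χ` on `G`, every vertex of color `χ(x,x)` then has more than `t` neighbors
of color `χ(y,y)`, and symmetrically. So these two color classes induce a subgraph of
minimum degree `> t ≥ a·h²`, which contains a topological `K_h` by the choice of `a`.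
-/

open SimpleGraph

/-- The interior (set of internal vertices) of a walk: its support minus the two endpoints. -/
def walkInterior {V : Type*} {G : SimpleGraph V} {x y : V} (p : G.Walk x y) : Set V :=
  {z | z ∈ p.support ∧ z ≠ x ∧ z ≠ y}

/-- `H` is (isomorphic to) a topological subgraph of `G`: there is an injective map
`φ : V(H) → V(G)` together with, for every edge `xy` of `H`, a path in `G` from `φ x`
to `φ y` of length at least 1, such that these paths are pairwise internally
vertex-disjoint and no internal vertex of any of them lies in the image of `φ`. -/
def IsTopSubgraph {W : Type*} {V : Type*} (H : SimpleGraph W) (G : SimpleGraph V) : Prop :=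
  ∃ φ : W → V, Function.Injective φ ∧
    ∃ P : ∀ x y : W, H.Adj x y → G.Walk (φ x) (φ y),
      (∀ x y (hxy : H.Adj x y), (P x y hxy).IsPath ∧ 0 < (P x y hxy).length) ∧
      (∀ x y (hxy : H.Adj x y), P y x hxy.symm = (P x y hxy).reverse) ∧
      (∀ x y (hxy : H.Adj x y), Disjoint (walkInterior (P x y hxy)) (Set.range φ)) ∧
      (∀ x y (hxy : H.Adj x y), ∀ x' y' (hxy' : H.Adj x' y'), s(x, y) ≠ s(x', y') →
        Disjoint (walkInterior (P x y hxy)) (walkInterior (P x' y' hxy')))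

/-- `G` contains the complete graph on `h` vertices as a topological subgraph. -/
def HasTopK {V : Type*} (G : SimpleGraph V) (h : ℕ) : Prop :=
  IsTopSubgraph (⊤ : SimpleGraph (Fin h)) G

/-- `a` is a constant witnessing the Bollobás–Thomason / Komlós–Szemerédi degree bound:
for every `h ≥ 1`, every finite simple graph excluding `K_h` as a topological subgraph
has degree sum at most `a·h²·n`. -/
def DegSumConst (a : ℝ) : Prop :=
  ∀ (n h : ℕ) (G : SimpleGraph (Fin n)), 1 ≤ h → ¬ HasTopK G h →
    ∑ v : Fin n, (({u | G.Adj v u}.ncard : ℝ)) ≤ a * (h : ℝ) ^ 2 * (n : ℝ)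

/-- One refinement round of Color Refinement on the complete graph on `V`, where the
current vertex partition is `r` and the arc color of `(v,w)` is the pair
`(G.Adj v w, χ v w)` (multiset equality is expressed by equality of all counts). -/
def crStep {V C : Type*} (G : SimpleGraph V) (χ : V → V → C) (r : V → V → Prop) :
    V → V → Prop := fun x y =>
  r x y ∧ ∀ (z : V) (c₁ c₂ : C),
    ({u | u ≠ x ∧ r u z ∧ χ x u = c₁ ∧ χ u x = c₂ ∧ G.Adj x u}.ncard =
      {u | u ≠ y ∧ r u z ∧ χ y u = c₁ ∧ χ u y = c₂ ∧ G.Adj y u}.ncard) ∧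
    ({u | u ≠ x ∧ r u z ∧ χ x u = c₁ ∧ χ u x = c₂ ∧ ¬ G.Adj x u}.ncard =
      {u | u ≠ y ∧ r u z ∧ χ y u = c₁ ∧ χ u y = c₂ ∧ ¬ G.Adj y u}.ncard)

/-- The Color Refinement stabilization of the partition `r` (iterating the refinement
round enough times to reach the stable partition). -/
def crStable {V C : Type*} [Fintype V] (G : SimpleGraph V) (χ : V → V → C)
    (r : V → V → Prop) : V → V → Prop :=
  (crStep G χ)^[Fintype.card V + 1] r

/-- Split all color classes of size at most `t` into singletons. -/
def splitSmall {V : Type*} (t : ℕ) (r : V → V → Prop) : V → V → Prop := fun x y =>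
  r x y ∧ ({u | r u x}.ncard ≤ t → x = y)

/-- The `t`-CR-stable partition obtained from the initial partition `r`: alternately
apply Color Refinement and split the classes of size at most `t`, until stable. -/
def tCRStable {V C : Type*} [Fintype V] (G : SimpleGraph V) (χ : V → V → C) (t : ℕ)
    (r : V → V → Prop) : V → V → Prop :=
  (fun s => splitSmall t (crStable G χ s))^[Fintype.card V + 1] r

/-- The partition obtained from the vertex coloring `v ↦ χ v v` by individualizing
every vertex of `X`. -/
def indivRel {V C : Type*} (χ : V → V → C) (X : Set V) : V → V → Prop := fun x y =>
  χ x x = χ y y ∧ (x ∈ X ↔ y ∈ X) ∧ (x ∈ X → x = y)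

/-- The `t`-closure `cl_t^{(G,χ)}(X)`: the set of vertices whose color class in the
`t`-CR-stable coloring (after individualizing `X`) is a singleton. -/
def clSet {V C : Type*} [Fintype V] (G : SimpleGraph V) (χ : V → V → C) (t : ℕ)
    (X : Set V) : Set V :=
  {v | {u | tCRStable G χ t (indivRel χ X) u v}.ncard = 1}

/-- The arc relation of the `t`-closure graph of `(G,χ)`. -/
def clArc {V C : Type*} [Fintype V] (G : SimpleGraph V) (χ : V → V → C) (t : ℕ) :
    V → V → Prop := fun v w => v ≠ w ∧ w ∈ clSet G χ t {v}

/-- A vertex is maximal if it lies in a strongly connected component of the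
`t`-closure graph without outgoing arcs. -/
def MaximalVtx {V C : Type*} [Fintype V] (G : SimpleGraph V) (χ : V → V → C) (t : ℕ)
    (v : V) : Prop :=
  ∀ u, clArc G χ t v u → clArc G χ t u v

/-- A vertex coloring is `1`-stable. -/
def IsOneStable {V C : Type*} (G : SimpleGraph V) (lam : V → C) : Prop :=
  ∀ v w, lam v = lam w → ∀ c,
    {u | G.Adj v u ∧ lam u = c}.ncard = {u | G.Adj w u ∧ lam u = c}.ncard

/-- A pair coloring is `2`-stable on the simple graph `G`. -/
def IsTwoStable {V C : Type*} (G : SimpleGraph V) (χ : V → V → C) : Prop :=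
  ∀ v w v' w', χ v w = χ v' w' →
    ((v = w ↔ v' = w') ∧ (G.Adj v w ↔ G.Adj v' w') ∧ χ v v = χ v' v' ∧ χ w w = χ w' w') ∧
    ∀ c₁ c₂, {u | χ v u = c₁ ∧ χ u w = c₂}.ncard = {u | χ v' u = c₁ ∧ χ u w' = c₂}.ncard

/-- A pair coloring is `2`-stable on the directed graph with arc relation `E`. -/
def IsTwoStableDigraph {V C : Type*} (E : V → V → Prop) (χ : V → V → C) : Prop :=
  ∀ v w v' w', χ v w = χ v' w' →
    ((v = w ↔ v' = w') ∧ (E v w ↔ E v' w') ∧ (E w v ↔ E w' v') ∧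
      χ v v = χ v' v' ∧ χ w w = χ w' w') ∧
    ∀ c₁ c₂, {u | χ v u = c₁ ∧ χ u w = c₂}.ncard = {u | χ v' u = c₁ ∧ χ u w' = c₂}.ncard

/-- A coloring of triples is `3`-stable on the simple graph `G`. -/
def IsThreeStable {V C : Type*} (G : SimpleGraph V) (χ₃ : V → V → V → C) : Prop :=
  ∀ v₁ v₂ v₃ w₁ w₂ w₃, χ₃ v₁ v₂ v₃ = χ₃ w₁ w₂ w₃ →
    ((v₁ = v₂ ↔ w₁ = w₂) ∧ (v₁ = v₃ ↔ w₁ = w₃) ∧ (v₂ = v₃ ↔ w₂ = w₃) ∧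
      (G.Adj v₁ v₂ ↔ G.Adj w₁ w₂) ∧ (G.Adj v₁ v₃ ↔ G.Adj w₁ w₃) ∧
      (G.Adj v₂ v₃ ↔ G.Adj w₂ w₃)) ∧
    ∀ c₁ c₂ c₃,
      {u | χ₃ u v₂ v₃ = c₁ ∧ χ₃ v₁ u v₃ = c₂ ∧ χ₃ v₁ v₂ u = c₃}.ncard =
        {u | χ₃ u w₂ w₃ = c₁ ∧ χ₃ w₁ u w₃ = c₂ ∧ χ₃ w₁ w₂ u = c₃}.ncard

/-- Reachability in `G` by a walk avoiding the set `S`. -/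
def ReachOutside {V : Type*} (G : SimpleGraph V) (S : Set V) (x y : V) : Prop :=
  ∃ p : G.Walk x y, ∀ z ∈ p.support, z ∉ S

/-- `Z` is the vertex set of a connected component of the induced subgraph `G − S`. -/
def IsCompOutside {V : Type*} (G : SimpleGraph V) (S Z : Set V) : Prop :=
  ∃ x₀, x₀ ∉ S ∧ Z = {y | ReachOutside G S x₀ y}

/-- The neighborhood `N_G(S)` of a set `S`: all vertices outside `S` with a neighbor in `S`. -/
def nbhdOf {V : Type*} (G : SimpleGraph V) (S : Set V) : Set V :=
  {v | v ∉ S ∧ ∃ u ∈ S, G.Adj v u}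

/-- A partition of the vertex set (given as an equivalence relation `r`) is
`λ`-definable: for some set `Cs` of colors attained on off-diagonal pairs, the classes
of `r` are exactly the connected components of the graph with edges
`{v,w}` (`v ≠ w`) such that `λ(v,w) ∈ Cs`. -/
def LamDefinable {V C : Type*} (lam : V → V → C) (r : V → V → Prop) : Prop :=
  ∃ Cs : Set C, (∀ c ∈ Cs, ∃ v w : V, v ≠ w ∧ lam v w = c) ∧
    ∀ x y, r x y ↔ (SimpleGraph.fromRel (fun v w => lam v w ∈ Cs)).Reachable x y

section Refinement

variable {V : Type*}

lemma card_quot_lt_of_lt [Finite V] {r s : V → V → Prop} (hs : Equivalence s) (hlt : s < r) :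
    Nat.card (Quot r) < Nat.card (Quot s) := by
  have := Fintype.ofFinite (Quot r)
  have := Fintype.ofFinite (Quot s)
  rw [Nat.card_eq_fintype_card, Nat.card_eq_fintype_card]
  refine Fintype.card_lt_of_surjective_not_injective (Quot.map id hlt.le)
    (Function.Surjective.of_comp (g := Quot.mk s) Quot.mk_surjective)
    fun hinj => hlt.ne (le_antisymm hlt.le fun x y hxy => ?_)
  have : Quot.mk s x = Quot.mk s y := hinj (Quot.sound hxy)
  exact hs.eqvGen_iff.1 (Quot.eq.1 this)

/-- Each round that changes the relation adds a class, and there are at most `card V`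
classes. -/
lemma iterate_card_succ_isFixedPt [Fintype V] {F : (V → V → Prop) → (V → V → Prop)}
    (hF : F ≤ id) (hequiv : ∀ s, Equivalence s → Equivalence (F s)) {r : V → V → Prop}
    (hr : Equivalence r) : F (F^[Fintype.card V + 1] r) = F^[Fintype.card V + 1] r := by
  have hstep : ∀ k, F (F^[k] r) = F^[k] r ∨ k ≤ Nat.card (Quot (F^[k] r)) := by
    intro k
    induction k with
    | zero => exact Or.inr (Nat.zero_le _)
    | succ k ih =>
      rw [Function.iterate_succ_apply']
      by_cases hfix : F (F^[k] r) = F^[k] r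
      · exact Or.inl (by rw [hfix, hfix])
      · have hequiv' := hequiv _ (Function.Iterate.rec Equivalence hr hequiv k)
        exact Or.inr ((ih.resolve_left hfix).trans_lt
          (card_quot_lt_of_lt hequiv' (lt_of_le_of_ne (hF _) hfix)))
  refine (hstep _).resolve_right fun hcard => ?_
  have := Nat.card_le_card_of_surjective _ (Quot.mk_surjective (r := F^[Fintype.card V + 1] r))
  rw [Nat.card_eq_fintype_card (α := V)] at this
  omega

end Refinement

lemma Equivalence.setOf_rel_eq {α : Type*} {r : α → α → Prop} (hr : Equivalence r) {a b : α}
    (hab : r a b) : {u | r u a} = {u | r u b} :=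
  Set.ext fun _ => ⟨fun h => hr.trans h hab, fun h => hr.trans h (hr.symm hab)⟩

section TCRStable

variable {V C : Type*} {G : SimpleGraph V} {χ : V → V → C} {t : ℕ} {r : V → V → Prop}

lemma crStep_le (r : V → V → Prop) : crStep G χ r ≤ r := fun _ _ h => h.1

lemma crStep_equivalence (hr : Equivalence r) : Equivalence (crStep G χ r) where
  refl x := ⟨hr.refl x, fun _ _ _ => ⟨rfl, rfl⟩⟩
  symm h := ⟨hr.symm h.1, fun z c₁ c₂ => ⟨(h.2 z c₁ c₂).1.symm, (h.2 z c₁ c₂).2.symm⟩⟩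
  trans h h' := ⟨hr.trans h.1 h'.1, fun z c₁ c₂ =>
    ⟨(h.2 z c₁ c₂).1.trans (h'.2 z c₁ c₂).1, (h.2 z c₁ c₂).2.trans (h'.2 z c₁ c₂).2⟩⟩

lemma splitSmall_le (r : V → V → Prop) : splitSmall t r ≤ r := fun _ _ h => h.1

lemma splitSmall_equivalence (hr : Equivalence r) : Equivalence (splitSmall t r) where
  refl x := ⟨hr.refl x, fun _ => rfl⟩
  symm h := ⟨hr.symm h.1, fun hle => (h.2 (hr.setOf_rel_eq (hr.symm h.1) ▸ hle)).symm⟩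
  trans h h' :=
    ⟨hr.trans h.1 h'.1, fun hle => (h.2 hle).trans (h'.2 (hr.setOf_rel_eq h.1 ▸ hle))⟩

lemma indivRel_equivalence (χ : V → V → C) (X : Set V) : Equivalence (indivRel χ X) where
  refl _ := ⟨rfl, Iff.rfl, fun _ => rfl⟩
  symm := fun ⟨h₁, h₂, h₃⟩ => ⟨h₁.symm, h₂.symm, fun hy => (h₃ (h₂.2 hy)).symm⟩
  trans := fun ⟨h₁, h₂, h₃⟩ ⟨h₁', h₂', h₃'⟩ =>
    ⟨h₁.trans h₁', h₂.trans h₂', fun hx => (h₃ hx).trans (h₃' (h₂.1 hx))⟩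

variable [Fintype V]

lemma crStable_le (r : V → V → Prop) : crStable G χ r ≤ r :=
  Function.iterate_le_id_of_le_id (crStep_le (G := G) (χ := χ)) _ r

lemma crStable_equivalence (hr : Equivalence r) : Equivalence (crStable G χ r) :=
  Function.Iterate.rec Equivalence hr (fun _ => crStep_equivalence) _

lemma tCRStable_le (r : V → V → Prop) : tCRStable G χ t r ≤ r :=
  Function.iterate_le_id_of_le_id (fun s => (splitSmall_le _).trans (crStable_le s)) _ r

lemma tCRStable_equivalence (hr : Equivalence r) : Equivalence (tCRStable G χ t r) :=
  Function.Iterate.rec Equivalence hr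
    (fun _ hs => splitSmall_equivalence (crStable_equivalence hs)) _

lemma splitSmall_crStable_tCRStable (hr : Equivalence r) :
    splitSmall t (crStable G χ (tCRStable G χ t r)) = tCRStable G χ t r :=
  iterate_card_succ_isFixedPt (fun s => (splitSmall_le _).trans (crStable_le s))
    (fun _ hs => splitSmall_equivalence (crStable_equivalence hs)) hr

lemma crStable_tCRStable (hr : Equivalence r) :
    crStable G χ (tCRStable G χ t r) = tCRStable G χ t r :=
  le_antisymm (crStable_le _) ((splitSmall_crStable_tCRStable hr).symm.le.trans (splitSmall_le _))

lemma crStep_tCRStable (hr : Equivalence r) :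
    crStep G χ (tCRStable G χ t r) = tCRStable G χ t r := by
  set R := tCRStable G χ t r
  have hR : crStep G χ ((crStep G χ)^[Fintype.card V] R) = R := by
    rw [← Function.iterate_succ_apply' (crStep G χ)]
    exact crStable_tCRStable hr
  have hiter : (crStep G χ)^[Fintype.card V] R = R :=
    le_antisymm (Function.iterate_le_id_of_le_id crStep_le _ R) (hR.symm.le.trans (crStep_le _))
  rwa [hiter] at hR

lemma eq_of_tCRStable_of_ncard_le (hr : Equivalence r) {x y : V} (hxy : tCRStable G χ t r x y)
    (hcard : {u | tCRStable G χ t r u x}.ncard ≤ t) : x = y := by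
  rw [← splitSmall_crStable_tCRStable hr, crStable_tCRStable hr] at hxy
  exact hxy.2 hcard

/-- The class of `y` is not a singleton, hence has more than `t` elements, and by stability
each of them is adjacent to `x`, whose class is `{x}`. -/
lemma lt_ncard_adj_of_mem_clSet_of_notMem {X : Set V} {x y : V} (hx : x ∈ clSet G χ t X)
    (hy : y ∉ clSet G χ t X) (hxy : G.Adj x y) :
    t < {z | G.Adj x z ∧ χ z z = χ y y}.ncard := by
  have hr := indivRel_equivalence χ X
  set R := tCRStable G χ t (indivRel χ X)
  have hR : Equivalence R := tCRStable_equivalence hr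
  have hxR : ∀ u, R u x → u = x := by
    obtain ⟨b, hb⟩ := Set.ncard_eq_one.1 hx
    have hxb : x = b := (Set.ext_iff.1 hb x).1 (hR.refl x)
    exact fun u hu => ((Set.ext_iff.1 hb u).1 hu).trans hxb.symm
  have hclass : t < {u | R u y}.ncard := by
    by_contra! hle
    refine hy (Set.ncard_eq_one.2 ⟨y, Set.eq_singleton_iff_unique_mem.2 ⟨hR.refl y, ?_⟩⟩)
    exact fun u hu => eq_of_tCRStable_of_ncard_le hr hu (hR.setOf_rel_eq hu ▸ hle)
  refine hclass.trans_le (Set.ncard_le_ncard (fun y' hy' => ?_) (Set.toFinite _))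
  have hstep : crStep G χ R y' y := (crStep_tCRStable hr).symm ▸ hy'
  obtain ⟨u, -, hux, -, -, hadj⟩ :
      {u | u ≠ y' ∧ R u x ∧ χ y' u = χ y x ∧ χ u y' = χ x y ∧ G.Adj y' u}.Nonempty := by
    rw [← Set.ncard_pos, (hstep.2 x _ _).1, Set.ncard_pos]
    exact ⟨x, hxy.ne, hR.refl x, rfl, rfl, hxy.symm⟩
  exact ⟨hxR u hux ▸ hadj.symm, (tCRStable_le _ _ _ hy').1⟩

end TCRStable

lemma ncard_eq_of_ncard_fiber_eq {α β : Type*} [Finite α] {p q : α → Prop} {f g : α → β}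
    (h : ∀ b, {a | p a ∧ f a = b}.ncard = {a | q a ∧ g a = b}.ncard) :
    {a | p a}.ncard = {a | q a}.ncard := by
  classical
  have := Fintype.ofFinite α
  let T : Finset β := Finset.univ.image f ∪ Finset.univ.image g
  simp only [Set.ncard_eq_toFinset_card', Set.toFinset_ofPred] at h ⊢
  rw [Finset.card_eq_sum_card_fiberwise (f := f) (t := T)
      fun a _ => Finset.mem_union_left _ (Finset.mem_image_of_mem f (Finset.mem_univ a)),
    Finset.card_eq_sum_card_fiberwise (f := g) (t := T)
      fun a _ => Finset.mem_union_right _ (Finset.mem_image_of_mem g (Finset.mem_univ a))]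
  refine Finset.sum_congr rfl fun b _ => ?_
  simpa only [Finset.filter_filter] using h b

namespace IsTwoStable

variable {V C : Type*} [Finite V] {G : SimpleGraph V} {χ : V → V → C}

lemma ncard_row_eq (h2G : IsTwoStable G χ) {u u' : V} (huu : χ u u = χ u' u') (d : C) :
    {z | χ u z = d}.ncard = {z | χ u' z = d}.ncard :=
  ncard_eq_of_ncard_fiber_eq (f := fun z => χ z u) (g := fun z => χ z u')
    ((h2G u u u' u' huu).2 d)

lemma ncard_adj_diag_eq (h2G : IsTwoStable G χ) {u u' : V} (huu : χ u u = χ u' u') (c : C) :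
    {z | G.Adj u z ∧ χ z z = c}.ncard = {z | G.Adj u' z ∧ χ z z = c}.ncard := by
  refine ncard_eq_of_ncard_fiber_eq (f := χ u) (g := χ u') fun d => ?_
  -- by 2-stability, whether `G.Adj w z ∧ χ z z = c` holds is determined by the color `χ w z`
  have hfiber : ∀ w, {z | (G.Adj w z ∧ χ z z = c) ∧ χ w z = d} =
      {z | (∃ p q, χ p q = d ∧ G.Adj p q ∧ χ q q = c) ∧ χ w z = d} := by
    intro w
    ext z
    refine ⟨fun ⟨⟨hadj, hc⟩, hd⟩ => ⟨⟨w, z, hd, hadj, hc⟩, hd⟩,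
      fun ⟨⟨p, q, hpq, hadj, hc⟩, hd⟩ => ⟨?_, hd⟩⟩
    obtain ⟨⟨-, hadj', -, hq⟩, -⟩ := h2G p q w z (hpq.trans hd.symm)
    exact ⟨hadj'.1 hadj, hq.symm.trans hc⟩
  by_cases hd : ∃ p q, χ p q = d ∧ G.Adj p q ∧ χ q q = c <;>
    simp only [hfiber, hd, true_and, false_and, Set.ofPred_false]
  exact h2G.ncard_row_eq huu d

lemma le_ncard_adj_of_two_colors (h2G : IsTwoStable G χ) {x y : V} {d : ℕ}
    (hx : d ≤ {z | G.Adj x z ∧ χ z z = χ y y}.ncard)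
    (hy : d ≤ {z | G.Adj y z ∧ χ z z = χ x x}.ncard) :
    ∀ u ∈ {u | χ u u = χ x x ∨ χ u u = χ y y},
      d ≤ {z | G.Adj u z ∧ z ∈ {u | χ u u = χ x x ∨ χ u u = χ y y}}.ncard := by
  rintro u (hu | hu)
  · calc d ≤ {z | G.Adj x z ∧ χ z z = χ y y}.ncard := hx
      _ = {z | G.Adj u z ∧ χ z z = χ y y}.ncard := h2G.ncard_adj_diag_eq hu.symm _
      _ ≤ {z | G.Adj u z ∧ z ∈ {u | χ u u = χ x x ∨ χ u u = χ y y}}.ncard :=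
        Set.ncard_le_ncard (fun _ hz => ⟨hz.1, Or.inr hz.2⟩) (Set.toFinite _)
  · calc d ≤ {z | G.Adj y z ∧ χ z z = χ x x}.ncard := hy
      _ = {z | G.Adj u z ∧ χ z z = χ x x}.ncard := h2G.ncard_adj_diag_eq hu.symm _
      _ ≤ {z | G.Adj u z ∧ z ∈ {u | χ u u = χ x x ∨ χ u u = χ y y}}.ncard :=
        Set.ncard_le_ncard (fun _ hz => ⟨hz.1, Or.inl hz.2⟩) (Set.toFinite _)

end IsTwoStable

section TopologicalSubgraph

variable {V W U : Type*}

lemma walkInterior_map {G : SimpleGraph V} {G' : SimpleGraph W} (f : G →g G')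
    (hf : Function.Injective f) {x y : V} (p : G.Walk x y) :
    walkInterior (p.map f) = f '' walkInterior p := by
  ext z
  simp only [walkInterior, Set.mem_ofPred_eq, Walk.support_map, List.mem_map, Set.mem_image]
  constructor
  · rintro ⟨⟨z, hz, rfl⟩, hzx, hzy⟩
    exact ⟨z, ⟨hz, fun h => hzx (h ▸ rfl), fun h => hzy (h ▸ rfl)⟩, rfl⟩
  · rintro ⟨z, ⟨hz, hzx, hzy⟩, rfl⟩
    exact ⟨⟨z, hz, rfl⟩, fun h => hzx (hf h), fun h => hzy (hf h)⟩

lemma IsTopSubgraph.map {H : SimpleGraph U} {G : SimpleGraph V} {G' : SimpleGraph W}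
    (f : G →g G') (hf : Function.Injective f) (hH : IsTopSubgraph H G) : IsTopSubgraph H G' := by
  obtain ⟨φ, hφ, P, hPath, hRev, hInt, hDisj⟩ := hH
  refine ⟨f ∘ φ, hf.comp hφ, fun x y hxy => (P x y hxy).map f, fun x y hxy => ?_,
    fun x y hxy => ?_, fun x y hxy => ?_, fun x y hxy x' y' hxy' hne => ?_⟩
  · exact ⟨(hPath x y hxy).1.map hf, (Walk.length_map _ _).symm ▸ (hPath x y hxy).2⟩
  · simp only [hRev x y hxy, Walk.reverse_map]
  · rw [walkInterior_map f hf, Set.range_comp]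
    exact (Set.disjoint_image_iff hf).2 (hInt x y hxy)
  · rw [walkInterior_map f hf, walkInterior_map f hf]
    exact (Set.disjoint_image_iff hf).2 (hDisj x y hxy x' y' hxy' hne)

end TopologicalSubgraph

lemma DegSumConst.le_of_le_ncard_adj {V : Type*} {a : ℝ} (hdeg : DegSumConst a) {h : ℕ}
    (hh : 1 ≤ h) {G : SimpleGraph V} (hK : ¬ HasTopK G h) {S : Set V} [Finite S]
    (hS : S.Nonempty) {d : ℕ} (hmin : ∀ u ∈ S, d ≤ {z | G.Adj u z ∧ z ∈ S}.ncard) :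
    (d : ℝ) ≤ a * (h : ℝ) ^ 2 := by
  obtain ⟨m, ⟨e⟩⟩ := Finite.exists_equiv_fin S
  let f : Fin m → V := fun i => e.symm i
  have hf : Function.Injective f := Subtype.val_injective.comp e.symm.injective
  have hrange : Set.range f = S := by
    rw [show f = Subtype.val ∘ e.symm from rfl, Set.range_comp, e.symm.range_eq_univ,
      Set.image_univ, Subtype.range_coe]
  have hK' : ¬ HasTopK (G.comap f) h := fun hK' =>
    hK (IsTopSubgraph.map (Embedding.comap ⟨f, hf⟩ G).toHom hf hK')
  have hmin' : ∀ i, d ≤ {u | (G.comap f).Adj i u}.ncard := by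
    intro i
    have hpre : {u | (G.comap f).Adj i u} = f ⁻¹' {z | G.Adj (f i) z ∧ z ∈ S} := by
      ext u
      simp [← hrange]
    rw [hpre, Set.ncard_preimage_of_injective_subset_range hf (hrange ▸ fun z hz => hz.2)]
    exact hmin _ (hrange ▸ Set.mem_range_self i)
  have hm : (0 : ℝ) < m := by exact_mod_cast (e ⟨_, hS.some_mem⟩).pos
  have hsum : (m : ℝ) * d ≤ a * (h : ℝ) ^ 2 * m :=
    calc (m : ℝ) * d = ∑ _i : Fin m, (d : ℝ) := by simp
      _ ≤ ∑ i : Fin m, ({u | (G.comap f).Adj i u}.ncard : ℝ) :=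
        Finset.sum_le_sum fun i _ => by exact_mod_cast hmin' i
      _ ≤ a * (h : ℝ) ^ 2 * m := hdeg m h _ hh hK'
  nlinarith

theorem stmt_5_general {V C : Type*} [Fintype V]
    (a : ℝ) (ha : 2 ≤ a) (hdeg : DegSumConst a)
    (h : ℕ) (hh : 1 ≤ h)
    (G : SimpleGraph V)
    (t : ℕ) (ht : 144 * a ^ 2 * (h : ℝ) ^ 5 ≤ (t : ℝ))
    (χ : V → V → C) (h2G : IsTwoStable G χ)
    (c₀ : C)
    (hvw : ∃ v ∈ {u : V | χ u u = c₀}, ∃ w ∈ {u : V | χ u u = c₀},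
      clSet G χ t {v} ∩ clSet G χ t {w} = ∅ ∧
      ∃ x ∈ clSet G χ t {v}, ∃ y ∈ clSet G χ t {w}, G.Adj x y) :
    HasTopK G h := by
  obtain ⟨v, -, w, -, hdisj, x, hxv, y, hyw, hxy⟩ := hvw
  have hyv : y ∉ clSet G χ t {v} := fun hyv => hdisj.subset ⟨hyv, hyw⟩
  have hxw : x ∉ clSet G χ t {w} := fun hxw => hdisj.subset ⟨hxv, hxw⟩
  by_contra hK
  have hbound : ((t + 1 : ℕ) : ℝ) ≤ a * (h : ℝ) ^ 2 :=
    hdeg.le_of_le_ncard_adj hh hK ⟨x, Or.inl rfl⟩ (h2G.le_ncard_adj_of_two_colors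
      (lt_ncard_adj_of_mem_clSet_of_notMem hxv hyv hxy)
      (lt_ncard_adj_of_mem_clSet_of_notMem hyw hxw hxy.symm))
  have hh1 : (1 : ℝ) ≤ h := by exact_mod_cast hh
  have hpow : (h : ℝ) ^ 2 ≤ (h : ℝ) ^ 5 := pow_le_pow_right₀ hh1 (by norm_num)
  push_cast at hbound
  nlinarith [mul_le_mul_of_nonneg_left hpow (by linarith : (0 : ℝ) ≤ a)]

/-- Assume the Setup. If there exist `v,w ∈ X` such that `D(v) ∩ D(w) = ∅`
and some edge of `G` joins a vertex of `D(v)` to a vertex of `D(w)`, then `G` contains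
`K_h` as a topological subgraph. -/
theorem stmt_5 {V C : Type*} [Fintype V]
    (a : ℝ) (ha : 2 ≤ a) (hdeg : DegSumConst a)
    (h : ℕ) (hh : 1 ≤ h)
    (G : SimpleGraph V) (hconn : G.Connected)
    (t : ℕ) (ht : 144 * a ^ 2 * (h : ℝ) ^ 5 ≤ (t : ℝ))
    (χ : V → V → C) (h2G : IsTwoStable G χ)
    (h2H : IsTwoStableDigraph (clArc G χ t) χ)
    (c₀ : C) (hc₀ : ∃ v : V, χ v v = c₀ ∧ MaximalVtx G χ t v)
    (hvw : ∃ v ∈ {u : V | χ u u = c₀}, ∃ w ∈ {u : V | χ u u = c₀},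
      clSet G χ t {v} ∩ clSet G χ t {w} = ∅ ∧
      ∃ x ∈ clSet G χ t {v}, ∃ y ∈ clSet G χ t {w}, G.Adj x y) :
    HasTopK G h :=
  stmt_5_general a ha hdeg h hh G t ht χ h2G c₀ hvw
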